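/- Let (Ω, ℱ, μ) be a probability space, 2 ≤ p < ∞, θ ∈ (0,1], a < b, and c₃ ≥ 0. Let (Y_t)_{t∈[a,b]} be a family of real random variables in L^p(μ) with ‖Y_t − Y_s‖_p ≤ c₃ (∫_s^t (b−r)^{θ−1} dr)^{1/2} for all a ≤ s < t ≤ b. Then for every t ∈ [a,b) and every n ≥ 1 one has e_n({Y_s : s ∈ [t,b]} | L^p(μ)) ≤ √2 · c₃ θ^{−1/2} (b−t)^{θ/2} n^{−1/2}. -/

import Mathlib

open MeasureTheory
open scoped ENNReal

/-- The `n`-th entropy number of a set `A` in a (semi)normed space `E`: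
`e_n(A|E) = inf { ε > 0 : A can be covered by n closed balls of radius ε }`,
with value in `ℝ≥0∞` (so `e_n(A|E) = ∞` if no finite cover exists). -/
noncomputable def entropyNumber {E : Type*} [SeminormedAddCommGroup E]
    (n : ℕ) (A : Set E) : ℝ≥0∞ :=
  sInf {ε : ℝ≥0∞ | ∃ x : Fin n → E, ∀ a ∈ A, ∃ i, edist a (x i) ≤ ε}

/-!
Put `φ(s) = (b - s)^θ`. The hypothesis says `‖Y_u - Y_s‖_p² ≤ c₃² (φ(s) - φ(u)) / θ`, so `φ`
is the natural clock for `Y`. The points `t_k = b - (b - t)(1 - k/n)^{1/θ}`, `k < n`, split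
`[t, b]` into pieces of equal `φ`-length `φ(t)/n`; approximating `Y_s` by `Y_{t_k}` for the
last `t_k ≤ s` gives the error `c₃ (φ(t) / (nθ))^{1/2}`, so the factor `√2` is slack.
-/

lemma entropyNumber_le {E : Type*} [SeminormedAddCommGroup E] {n : ℕ} {A : Set E}
    {ε : ℝ≥0∞} (x : Fin n → E) (hx : ∀ a ∈ A, ∃ i, edist a (x i) ≤ ε) :
    entropyNumber n A ≤ ε :=
  sInf_le ⟨x, hx⟩

lemma ENNReal.ofReal_mul_le_ofReal_mul {c x y : ℝ} (hx : 0 ≤ x) (hxy : x ≤ y) :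
    ENNReal.ofReal (c * x) ≤ ENNReal.ofReal (c * y) := by
  rw [ENNReal.ofReal_mul' hx, ENNReal.ofReal_mul' (hx.trans hxy)]
  gcongr

lemma exists_nat_lt_le_le_add_one {n : ℕ} (hn : 1 ≤ n) {y : ℝ} (hy₀ : 0 ≤ y)
    (hyn : y ≤ n) : ∃ k < n, (k : ℝ) ≤ y ∧ y ≤ k + 1 := by
  rcases hyn.lt_or_eq with hlt | rfl
  · refine ⟨⌊y⌋₊, ?_, Nat.floor_le hy₀, (Nat.lt_floor_add_one y).le⟩
    exact_mod_cast (Nat.floor_le hy₀).trans_lt hlt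
  · refine ⟨n - 1, by omega, ?_, ?_⟩ <;> push_cast [Nat.cast_sub hn] <;> linarith

lemma integral_sub_rpow_sub_one (b θ s u : ℝ) (hθ : 0 < θ) :
    ∫ r in s..u, (b - r) ^ (θ - 1) = ((b - s) ^ θ - (b - u) ^ θ) / θ := by
  rw [intervalIntegral.integral_comp_sub_left (fun x => x ^ (θ - 1)) b,
    integral_rpow (Or.inl (by linarith)), sub_add_cancel]

/-- The `θ`-net `t_k^{n,θ}` of the interval `[t, b]`. -/
noncomputable def thetaNet (t b θ : ℝ) (n k : ℕ) : ℝ :=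
  b - (b - t) * (1 - k / n) ^ θ⁻¹

section thetaNet

variable {t b θ : ℝ} {n k : ℕ}

lemma one_sub_div_mem_Icc (hk : k ≤ n) : (1 - k / n : ℝ) ∈ Set.Icc 0 1 := by
  have : (k / n : ℝ) ≤ 1 := div_le_one_of_le₀ (by exact_mod_cast hk) n.cast_nonneg
  constructor <;> [linarith; linarith [show (0 : ℝ) ≤ k / n by positivity]]

lemma thetaNet_mem_Icc (htb : t ≤ b) (hθ : 0 ≤ θ) (hk : k ≤ n) :
    thetaNet t b θ n k ∈ Set.Icc t b := by
  obtain ⟨h₀, h₁⟩ := one_sub_div_mem_Icc hk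
  have hpow₀ : 0 ≤ (1 - k / n : ℝ) ^ θ⁻¹ := Real.rpow_nonneg h₀ _
  have hpow₁ : (1 - k / n : ℝ) ^ θ⁻¹ ≤ 1 := Real.rpow_le_one h₀ h₁ (inv_nonneg.2 hθ)
  constructor <;> unfold thetaNet <;> nlinarith

lemma sub_thetaNet_rpow (htb : t ≤ b) (hθ : θ ≠ 0) (hk : k ≤ n) :
    (b - thetaNet t b θ n k) ^ θ = (b - t) ^ θ * (1 - k / n) := by
  have h₀ := (one_sub_div_mem_Icc hk).1
  rw [thetaNet, sub_sub_cancel, Real.mul_rpow (by linarith) (Real.rpow_nonneg h₀ _),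
    Real.rpow_inv_rpow h₀ hθ]

lemma exists_thetaNet_le (htb : t < b) (hθ : 0 < θ) (hn : 1 ≤ n) {s : ℝ}
    (hs : s ∈ Set.Icc t b) :
    ∃ k < n, thetaNet t b θ n k ≤ s ∧
      (b - thetaNet t b θ n k) ^ θ - (b - s) ^ θ ≤ (b - t) ^ θ / n := by
  have hn₀ : (0 : ℝ) < n := by exact_mod_cast hn
  set D := (b - t) ^ θ
  set v := (b - s) ^ θ / D
  have hD : 0 < D := Real.rpow_pos_of_pos (by linarith) θ
  have hv₀ : 0 ≤ v := div_nonneg (Real.rpow_nonneg (by linarith [hs.2]) θ) hD.le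
  have hv₁ : v ≤ 1 := (div_le_one hD).2
    (Real.rpow_le_rpow (by linarith [hs.2]) (by linarith [hs.1]) hθ.le)
  obtain ⟨k, hkn, hky, hyk⟩ := exists_nat_lt_le_le_add_one hn
    (y := (1 - v) * n) (by nlinarith) (by nlinarith)
  have hv_lo : v ≤ 1 - k / n := by rw [le_sub_comm, div_le_iff₀ hn₀]; exact hky
  have hv_up : 1 - v ≤ k / n + 1 / n := by rw [← add_div, le_div_iff₀ hn₀]; exact hyk
  have hS : (b - s) ^ θ = D * v := (mul_div_cancel₀ _ hD.ne').symm
  have hnet := sub_thetaNet_rpow htb.le hθ.ne' hkn.le (t := t) (b := b)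
  refine ⟨k, hkn, ?_, ?_⟩
  · suffices b - s ≤ b - thetaNet t b θ n k by linarith
    rw [← Real.rpow_le_rpow_iff (by linarith [hs.2])
      (by linarith [(thetaNet_mem_Icc htb.le hθ.le hkn.le).2]) hθ, hnet, hS]
    gcongr
  · calc (b - thetaNet t b θ n k) ^ θ - (b - s) ^ θ = D * (1 - v - k / n) := by
          rw [hnet, hS]; ring
      _ ≤ D * (1 / n) := by gcongr; linarith
      _ = D / n := mul_one_div D n

end thetaNet

lemma eLpNorm_sub_le_of_rpow_sub_le {Ω : Type*} {mΩ : MeasurableSpace Ω} {μ : Measure Ω}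
    {p : ℝ≥0∞} {a b θ c₃ : ℝ} (hθ : 0 < θ) {Y : ℝ → Ω → ℝ}
    (hY : ∀ s t : ℝ, a ≤ s → s < t → t ≤ b →
      eLpNorm (Y t - Y s) p μ
        ≤ ENNReal.ofReal (c₃ * (∫ r in s..t, (b - r) ^ (θ - 1)) ^ ((1 : ℝ) / 2)))
    {s u δ : ℝ} (has : a ≤ s) (hsu : s ≤ u) (hub : u ≤ b)
    (hδ : (b - s) ^ θ - (b - u) ^ θ ≤ δ) :
    eLpNorm (Y u - Y s) p μ ≤ ENNReal.ofReal (c₃ * (δ / θ) ^ ((1 : ℝ) / 2)) := by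
  rcases hsu.lt_or_eq with hlt | rfl
  · have hgap₀ : 0 ≤ ((b - s) ^ θ - (b - u) ^ θ) / θ :=
      div_nonneg (sub_nonneg.2 (Real.rpow_le_rpow (by linarith) (by linarith) hθ.le)) hθ.le
    refine (hY s u has hlt hub).trans ?_
    rw [integral_sub_rpow_sub_one b θ s u hθ]
    exact ENNReal.ofReal_mul_le_ofReal_mul (Real.rpow_nonneg hgap₀ _)
      (Real.rpow_le_rpow hgap₀ (div_le_div_of_nonneg_right hδ hθ.le) (by norm_num))
  · simp

lemma sqrt_two_mul_rpow_eq {c d θ : ℝ} {n : ℕ} (hd : 0 ≤ d) (hθ : 0 < θ) :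
    c * (2 * d ^ θ / (n * θ)) ^ ((1 : ℝ) / 2)
      = Real.sqrt 2 * c * θ ^ (-(1 : ℝ) / 2) * d ^ (θ / 2) * (n : ℝ) ^ (-(1 : ℝ) / 2) := by
  rw [div_eq_mul_inv, mul_inv, Real.mul_rpow (by positivity) (by positivity),
    Real.mul_rpow (by positivity) (Real.rpow_nonneg hd _),
    Real.mul_rpow (by positivity) (by positivity), ← Real.rpow_mul hd,
    Real.inv_rpow n.cast_nonneg, Real.inv_rpow hθ.le, ← Real.rpow_neg n.cast_nonneg,
    ← Real.rpow_neg hθ.le, ← Real.sqrt_eq_rpow, neg_div]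
  ring_nf

theorem C3_implies_C7_abstract_general
    {Ω : Type*} {mΩ : MeasurableSpace Ω} (μ : Measure Ω)
    (p : ℝ≥0∞) [Fact (1 ≤ p)]
    (a b θ c₃ : ℝ) (hθ : θ ∈ Set.Ioc (0 : ℝ) 1)
    (Y : ℝ → Ω → ℝ)
    (hY_Lp : ∀ t ∈ Set.Icc a b, MemLp (Y t) p μ)
    (hY : ∀ s t : ℝ, a ≤ s → s < t → t ≤ b →
      eLpNorm (Y t - Y s) p μ
        ≤ ENNReal.ofReal (c₃ * (∫ r in s..t, (b - r) ^ (θ - 1)) ^ ((1 : ℝ) / 2)))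
    (t : ℝ) (ht : t ∈ Set.Ico a b) (n : ℕ) (hn : 1 ≤ n) :
    entropyNumber n {g : Lp ℝ p μ | ∃ s ∈ Set.Icc t b, (g : Ω → ℝ) =ᵐ[μ] Y s}
      ≤ ENNReal.ofReal
          (Real.sqrt 2 * c₃ * θ ^ (-(1 : ℝ) / 2) * (b - t) ^ (θ / 2)
            * (n : ℝ) ^ (-(1 : ℝ) / 2)) := by
  obtain ⟨hat, htb⟩ := ht
  have hnet_mem (k : Fin n) : thetaNet t b θ n k ∈ Set.Icc a b :=
    Set.Icc_subset_Icc_left hat (thetaNet_mem_Icc htb.le hθ.1.le k.isLt.le)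
  refine entropyNumber_le (fun k => (hY_Lp _ (hnet_mem k)).toLp _) ?_
  rintro g ⟨s, hs, hg⟩
  obtain ⟨k, hkn, hks, hgap⟩ := exists_thetaNet_le htb hθ.1 hn hs
  have hD : 0 ≤ (b - t) ^ θ / n / θ :=
    div_nonneg (div_nonneg (Real.rpow_nonneg (sub_nonneg.2 htb.le) θ) n.cast_nonneg) hθ.1.le
  refine ⟨⟨k, hkn⟩, ?_⟩
  rw [Lp.edist_def, eLpNorm_congr_ae (hg.sub (MemLp.coeFn_toLp _))]
  calc eLpNorm (Y s - Y (thetaNet t b θ n k)) p μ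
      ≤ ENNReal.ofReal (c₃ * ((b - t) ^ θ / n / θ) ^ ((1 : ℝ) / 2)) :=
        eLpNorm_sub_le_of_rpow_sub_le hθ.1 hY (hnet_mem ⟨k, hkn⟩).1 hks hs.2 hgap
    _ ≤ ENNReal.ofReal (c₃ * (2 * (b - t) ^ θ / n / θ) ^ ((1 : ℝ) / 2)) :=
        ENNReal.ofReal_mul_le_ofReal_mul (Real.rpow_nonneg hD _)
          (Real.rpow_le_rpow hD (by rw [mul_div_assoc, mul_div_assoc]; linarith) (by norm_num))
    _ = _ := by rw [div_div, sqrt_two_mul_rpow_eq (sub_nonneg.2 htb.le) hθ.1]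

/-- **(C3_l) ⇒ (C7_l), abstract form.** If `(Y_t)_{t ∈ [a,b]} ⊆ L^p(μ)` satisfies
`‖Y_t − Y_s‖_p ≤ c₃ (∫_s^t (b−r)^{θ−1} dr)^{1/2}` for `a ≤ s < t ≤ b`, then for every
`t ∈ [a,b)` and `n ≥ 1` one has
`e_n({Y_s : s ∈ [t,b]} | L^p(μ)) ≤ √2 · c₃ θ^{−1/2} (b−t)^{θ/2} n^{−1/2}`. -/
theorem C3_implies_C7_abstract
    {Ω : Type*} {mΩ : MeasurableSpace Ω} (μ : Measure Ω) [IsProbabilityMeasure μ]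
    (p : ℝ≥0∞) [Fact (1 ≤ p)] (hp1 : 2 ≤ p) (hp2 : p ≠ ∞)
    (a b θ c₃ : ℝ) (hab : a < b) (hθ : θ ∈ Set.Ioc (0 : ℝ) 1) (hc₃ : 0 ≤ c₃)
    (Y : ℝ → Ω → ℝ)
    (hY_Lp : ∀ t ∈ Set.Icc a b, MemLp (Y t) p μ)
    (hY : ∀ s t : ℝ, a ≤ s → s < t → t ≤ b →
      eLpNorm (Y t - Y s) p μ
        ≤ ENNReal.ofReal (c₃ * (∫ r in s..t, (b - r) ^ (θ - 1)) ^ ((1 : ℝ) / 2)))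
    (t : ℝ) (ht : t ∈ Set.Ico a b) (n : ℕ) (hn : 1 ≤ n) :
    entropyNumber n {g : Lp ℝ p μ | ∃ s ∈ Set.Icc t b, (g : Ω → ℝ) =ᵐ[μ] Y s}
      ≤ ENNReal.ofReal
          (Real.sqrt 2 * c₃ * θ ^ (-(1 : ℝ) / 2) * (b - t) ^ (θ / 2)
            * (n : ℝ) ^ (-(1 : ℝ) / 2)) :=
  C3_implies_C7_abstract_general (mΩ := mΩ) μ p a b θ c₃ hθ Y hY_Lp hY t ht n hn
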